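/- (Bounds on q₃ for low temperatures; Proposition prop:bounds-lowA.) Suppose A < −B²/(3C) and let (q₁, q₂, q₃) be a solution of (EL123)–(BC123) with q₃ < 0 everywhere in Ω. Then s₋/3 ≤ q₃(x,y) ≤ −s₊/6 for every (x,y) ∈ Ω. -/

import Mathlib

/-!
Everything follows from the weak maximum principle: at an interior maximum of a `C²` function the
Laplacian is nonpositive. For `Σ = q₁² + q₂² + 3 q₃²` the equations give
`ΔΣ ≥ 2 (λ²/L) (A Σ + 2 C Σ² + 3 B q₃ (q₁² + q₂² - q₃²))`, and for `q₃ ≤ 0` the right-hand side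
is at least `(2λ²/3L) Σ P(√(3Σ))`, where `P(s) = 2 C s² - B s + 3 A = 2 C (s - s₊)(s - s₋)`.
It is positive once `Σ > s₊²/3`, and `Σ ≤ s₊²/3` on `∂Ω`, so `Σ ≤ s₊²/3` in `Ω`. The reaction
term of the `q₃`-equation is negative where `q₃ < s₋/3`, and positive where `-s₊/6 < q₃ < 0` and
`Σ ≤ s₊²/3`; this excludes interior extrema of `q₃` beyond its boundary value
`-s₊/6 ∈ [s₋/3, 0)`.
-/

open MeasureTheory Set

noncomputable section

/-- `s₊ = (B + √(B² + 24|A|C))/(4C)`. -/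
def splus (A B C : ℝ) : ℝ := (B + Real.sqrt (B ^ 2 + 24 * |A| * C)) / (4 * C)

/-- `s₋ = (B − √(B² + 24|A|C))/(4C)`. -/
def sminus (A B C : ℝ) : ℝ := (B - Real.sqrt (B ^ 2 + 24 * |A| * C)) / (4 * C)

/-- The truncated square `Ω`. -/
def TSq (η : ℝ) : Set (ℝ × ℝ) :=
  {p | |p.1| < 1 - η ∧ |p.2| < 1 - η ∧ |p.1 + p.2| < 1 ∧ |p.1 - p.2| < 1}

/-- Long edge `C₁` on the line `x + y = 1`. -/
def edgeC1 (η : ℝ) : Set (ℝ × ℝ) := {p | p.1 + p.2 = 1 ∧ η ≤ p.1 ∧ p.1 ≤ 1 - η}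
/-- Long edge `C₂` on the line `y − x = 1`. -/
def edgeC2 (η : ℝ) : Set (ℝ × ℝ) := {p | p.2 - p.1 = 1 ∧ -(1 - η) ≤ p.1 ∧ p.1 ≤ -η}
/-- Long edge `C₃` on the line `x + y = −1`. -/
def edgeC3 (η : ℝ) : Set (ℝ × ℝ) := {p | p.1 + p.2 = -1 ∧ -(1 - η) ≤ p.1 ∧ p.1 ≤ -η}
/-- Long edge `C₄` on the line `x − y = 1`. -/
def edgeC4 (η : ℝ) : Set (ℝ × ℝ) := {p | p.1 - p.2 = 1 ∧ η ≤ p.1 ∧ p.1 ≤ 1 - η}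
/-- Short edge `S₁`, `x = 1 − η`. -/
def edgeS1 (η : ℝ) : Set (ℝ × ℝ) := {p | p.1 = 1 - η ∧ |p.2| ≤ η}
/-- Short edge `S₂`, `y = 1 − η`. -/
def edgeS2 (η : ℝ) : Set (ℝ × ℝ) := {p | p.2 = 1 - η ∧ |p.1| ≤ η}
/-- Short edge `S₃`, `x = −(1 − η)`. -/
def edgeS3 (η : ℝ) : Set (ℝ × ℝ) := {p | p.1 = -(1 - η) ∧ |p.2| ≤ η}
/-- Short edge `S₄`, `y = −(1 − η)`. -/
def edgeS4 (η : ℝ) : Set (ℝ × ℝ) := {p | p.2 = -(1 - η) ∧ |p.1| ≤ η}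

/-- The interpolating boundary function `g₀(s) = s₊ s/(2η)`. -/
def g0 (A B C η s : ℝ) : ℝ := splus A B C * s / (2 * η)

/-- The two-dimensional Laplacian: sum of the two second partial derivatives. -/
def lap2 (q : ℝ × ℝ → ℝ) (p : ℝ × ℝ) : ℝ :=
  deriv (deriv fun x => q (x, p.2)) p.1 + deriv (deriv fun y => q (p.1, y)) p.2

/-- `|∇q|²` in two dimensions. -/
def gradSq2 (q : ℝ × ℝ → ℝ) (p : ℝ × ℝ) : ℝ :=
  (deriv (fun x => q (x, p.2)) p.1) ^ 2 + (deriv (fun y => q (p.1, y)) p.2) ^ 2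

/-- The Dirichlet boundary condition `q₁ = q₁b` on `∂Ω`. -/
def BC1 (A B C η : ℝ) (q1 : ℝ × ℝ → ℝ) : Prop :=
  (∀ p ∈ edgeC1 η ∪ edgeC3 η, q1 p = -(splus A B C) / 2) ∧
  (∀ p ∈ edgeC2 η ∪ edgeC4 η, q1 p = splus A B C / 2) ∧
  (∀ p ∈ edgeS1 η ∪ edgeS3 η, q1 p = g0 A B C η p.2) ∧
  (∀ p ∈ edgeS2 η ∪ edgeS4 η, q1 p = g0 A B C η p.1)

/-- A solution of the system (EL123) with boundary conditions (BC123):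
a triple of functions in `C²(Ω) ∩ C(Ω̄)` satisfying the three PDEs in `Ω`,
with `q₁ = q₁b`, `q₂ = 0`, `q₃ = −s₊/6` on `∂Ω`. -/
def IsSolEL123 (A B C L lam η : ℝ) (q1 q2 q3 : ℝ × ℝ → ℝ) : Prop :=
  ContDiffOn ℝ 2 q1 (TSq η) ∧ ContDiffOn ℝ 2 q2 (TSq η) ∧ ContDiffOn ℝ 2 q3 (TSq η) ∧
  ContinuousOn q1 (closure (TSq η)) ∧ ContinuousOn q2 (closure (TSq η)) ∧
  ContinuousOn q3 (closure (TSq η)) ∧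
  (∀ p ∈ TSq η, lap2 q1 p =
    lam ^ 2 / L * q1 p *
      (A + 2 * B * q3 p + 2 * C * ((q1 p) ^ 2 + (q2 p) ^ 2 + 3 * (q3 p) ^ 2))) ∧
  (∀ p ∈ TSq η, lap2 q2 p =
    lam ^ 2 / L * q2 p *
      (A + 2 * B * q3 p + 2 * C * ((q1 p) ^ 2 + (q2 p) ^ 2 + 3 * (q3 p) ^ 2))) ∧
  (∀ p ∈ TSq η, lap2 q3 p =
    lam ^ 2 / L * q3 p *
      (A - B * q3 p + 2 * C * ((q1 p) ^ 2 + (q2 p) ^ 2 + 3 * (q3 p) ^ 2))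
      + lam ^ 2 * B / (3 * L) * ((q1 p) ^ 2 + (q2 p) ^ 2)) ∧
  BC1 A B C η q1 ∧
  (∀ p ∈ frontier (TSq η), q2 p = 0) ∧
  (∀ p ∈ frontier (TSq η), q3 p = -(splus A B C) / 6)


open Filter Topology

section Calculus

variable {f g : ℝ → ℝ} {a : ℝ}

theorem deriv_deriv_nonpos_of_isLocalMax (h : IsLocalMax f a) (hc : ContinuousAt f a) :
    deriv (deriv f) a ≤ 0 := by
  by_contra! hpos
  have hmin := isLocalMin_of_deriv_deriv_pos hpos h.deriv_eq_zero hc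
  have hconst : f =ᶠ[𝓝 a] fun _ => f a := (h.and hmin).mono fun _ hx => le_antisymm hx.1 hx.2
  have hderiv : deriv f =ᶠ[𝓝 a] fun _ => 0 :=
    hconst.eventuallyEq_nhds.mono fun _ hx => hx.deriv_eq.trans (deriv_const _ _)
  exact hpos.ne' (hderiv.deriv_eq.trans (deriv_const _ _))

theorem ContDiffAt.hasDerivAt_deriv_deriv (hf : ContDiffAt ℝ 2 f a) :
    HasDerivAt (deriv f) (deriv (deriv f) a) a :=
  ((hf.derivWithin (m := 1) (by norm_num)).differentiableAt one_ne_zero).hasDerivAt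

theorem ContDiffAt.eventually_hasDerivAt (hf : ContDiffAt ℝ 2 f a) :
    ∀ᶠ x in 𝓝 a, HasDerivAt f (deriv f x) x :=
  (hf.eventually (by simp)).mono fun _ hx => (hx.differentiableAt two_ne_zero).hasDerivAt

theorem deriv_deriv_add (hf : ContDiffAt ℝ 2 f a) (hg : ContDiffAt ℝ 2 g a) :
    deriv (deriv fun x => f x + g x) a = deriv (deriv f) a + deriv (deriv g) a := by
  have h : deriv (fun x => f x + g x) =ᶠ[𝓝 a] fun x => deriv f x + deriv g x :=
    (hf.eventually_hasDerivAt.and hg.eventually_hasDerivAt).mono fun _ hx => (hx.1.add hx.2).deriv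
  exact h.deriv_eq.trans (hf.hasDerivAt_deriv_deriv.add hg.hasDerivAt_deriv_deriv).deriv

theorem deriv_deriv_const_mul (c : ℝ) (f : ℝ → ℝ) (a : ℝ) :
    deriv (deriv fun x => c * f x) a = c * deriv (deriv f) a := by
  simp only [deriv_const_mul_field']

theorem deriv_deriv_sq (hf : ContDiffAt ℝ 2 f a) :
    deriv (deriv fun x => f x ^ 2) a = 2 * f a * deriv (deriv f) a + 2 * deriv f a ^ 2 := by
  have h : deriv (fun x => f x ^ 2) =ᶠ[𝓝 a] fun x => 2 * f x * deriv f x :=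
    hf.eventually_hasDerivAt.mono fun _ hx => by simpa using (hx.fun_pow 2).deriv
  rw [h.deriv_eq, (((hf.differentiableAt two_ne_zero).hasDerivAt.const_mul 2).fun_mul
    hf.hasDerivAt_deriv_deriv).deriv]
  ring

end Calculus

section Laplacian

variable {q u : ℝ × ℝ → ℝ} {p : ℝ × ℝ}

theorem ContDiffAt.comp_mk_left {n : WithTop ℕ∞} (hq : ContDiffAt ℝ n q p) :
    ContDiffAt ℝ n (fun x => q (x, p.2)) p.1 :=
  hq.comp (f := fun x : ℝ => (x, p.2)) p.1 (contDiffAt_id.prodMk contDiffAt_const)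

theorem ContDiffAt.comp_mk_right {n : WithTop ℕ∞} (hq : ContDiffAt ℝ n q p) :
    ContDiffAt ℝ n (fun y => q (p.1, y)) p.2 :=
  hq.comp (f := fun y : ℝ => (p.1, y)) p.2 (contDiffAt_const.prodMk contDiffAt_id)

theorem lap2_nonpos_of_isLocalMax (h : IsLocalMax q p) (hc : ContinuousAt q p) :
    lap2 q p ≤ 0 := by
  have hx : ContinuousAt (fun x : ℝ => (x, p.2)) p.1 := by fun_prop
  have hy : ContinuousAt (fun y : ℝ => (p.1, y)) p.2 := by fun_prop
  exact add_nonpos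
    (deriv_deriv_nonpos_of_isLocalMax (h.comp_continuous hx) (hc.comp hx))
    (deriv_deriv_nonpos_of_isLocalMax (h.comp_continuous hy) (hc.comp hy))

theorem lap2_add (hq : ContDiffAt ℝ 2 q p) (hu : ContDiffAt ℝ 2 u p) :
    lap2 (fun z => q z + u z) p = lap2 q p + lap2 u p := by
  simp only [lap2]
  rw [deriv_deriv_add hq.comp_mk_left hu.comp_mk_left,
    deriv_deriv_add hq.comp_mk_right hu.comp_mk_right]
  ring

theorem lap2_const_mul (c : ℝ) (q : ℝ × ℝ → ℝ) (p : ℝ × ℝ) :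
    lap2 (fun z => c * q z) p = c * lap2 q p := by
  simp only [lap2, deriv_deriv_const_mul]
  ring

theorem lap2_neg (q : ℝ × ℝ → ℝ) (p : ℝ × ℝ) :
    lap2 (fun z => -q z) p = -lap2 q p := by
  simpa using lap2_const_mul (-1) q p

theorem lap2_sq (hq : ContDiffAt ℝ 2 q p) :
    lap2 (fun z => q z ^ 2) p = 2 * q p * lap2 q p + 2 * gradSq2 q p := by
  simp only [lap2, gradSq2]
  rw [deriv_deriv_sq hq.comp_mk_left, deriv_deriv_sq hq.comp_mk_right]
  ring

end Laplacian

section MaximumPrinciple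

variable {Ω : Set (ℝ × ℝ)} {u : ℝ × ℝ → ℝ} {M : ℝ}

theorem le_on_closure_of_lap2_pos (hΩ : IsOpen Ω) (hK : IsCompact (closure Ω))
    (hu : ContinuousOn u (closure Ω)) (hfr : ∀ p ∈ frontier Ω, u p ≤ M)
    (hlap : ∀ p ∈ Ω, M < u p → 0 < lap2 u p) : ∀ p ∈ closure Ω, u p ≤ M := by
  intro p hp
  obtain ⟨p₀, hp₀, hmax⟩ := hK.exists_isMaxOn ⟨p, hp⟩ hu
  refine (hmax hp).trans ?_
  by_cases hint : p₀ ∈ Ω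
  · by_contra! hgt
    have hloc : IsLocalMax u p₀ :=
      (hmax.on_subset subset_closure).isLocalMax (hΩ.mem_nhds hint)
    have hcont : ContinuousAt u p₀ :=
      hu.continuousAt (mem_nhds_iff.2 ⟨Ω, subset_closure, hΩ, hint⟩)
    exact (lap2_nonpos_of_isLocalMax hloc hcont).not_gt (hlap p₀ hint hgt)
  · exact hfr p₀ (hΩ.frontier_eq ▸ ⟨hp₀, hint⟩)

theorem ge_on_closure_of_lap2_neg (hΩ : IsOpen Ω) (hK : IsCompact (closure Ω))
    (hu : ContinuousOn u (closure Ω)) (hfr : ∀ p ∈ frontier Ω, M ≤ u p)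
    (hlap : ∀ p ∈ Ω, u p < M → lap2 u p < 0) : ∀ p ∈ closure Ω, M ≤ u p := by
  have := le_on_closure_of_lap2_pos (u := fun z => -u z) (M := -M) hΩ hK hu.neg
    (fun p hp => neg_le_neg (hfr p hp))
    (fun p hp hlt => by simpa [lap2_neg] using hlap p hp (neg_lt_neg_iff.1 hlt))
  exact fun p hp => neg_le_neg_iff.1 (this p hp)

end MaximumPrinciple

theorem isOpen_TSq (η : ℝ) : IsOpen (TSq η) := by
  simp only [TSq, ofPred_and]
  refine (isOpen_lt ?_ ?_).inter ((isOpen_lt ?_ ?_).inter ((isOpen_lt ?_ ?_).inter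
    (isOpen_lt ?_ ?_))) <;> fun_prop

theorem closure_TSq_subset (η : ℝ) :
    closure (TSq η) ⊆
      {p | |p.1| ≤ 1 - η ∧ |p.2| ≤ 1 - η ∧ |p.1 + p.2| ≤ 1 ∧ |p.1 - p.2| ≤ 1} := by
  refine closure_minimal (fun _ hp => ⟨hp.1.le, hp.2.1.le, hp.2.2.1.le, hp.2.2.2.le⟩) ?_
  simp only [ofPred_and]
  refine (isClosed_le ?_ ?_).inter ((isClosed_le ?_ ?_).inter ((isClosed_le ?_ ?_).inter
    (isClosed_le ?_ ?_))) <;> fun_prop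

theorem isCompact_closure_TSq (η : ℝ) : IsCompact (closure (TSq η)) := by
  refine (Metric.isBounded_Icc ((-1, -1) : ℝ × ℝ) (1, 1)).isCompact_closure.of_isClosed_subset
    isClosed_closure (closure_mono fun p hp => ?_)
  obtain ⟨-, -, hs, hd⟩ := hp
  rw [abs_lt] at hs hd
  exact ⟨⟨by linarith, by linarith⟩, ⟨by linarith, by linarith⟩⟩

theorem frontier_TSq_subset (η : ℝ) :
    frontier (TSq η) ⊆ edgeC1 η ∪ edgeC2 η ∪ edgeC3 η ∪ edgeC4 η ∪
      edgeS1 η ∪ edgeS2 η ∪ edgeS3 η ∪ edgeS4 η := by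
  rw [(isOpen_TSq η).frontier_eq]
  rintro p ⟨hcl, hout⟩
  obtain ⟨h1, h2, h3, h4⟩ := closure_TSq_subset η hcl
  simp only [TSq, edgeC1, edgeC2, edgeC3, edgeC4, edgeS1, edgeS2, edgeS3, edgeS4, mem_union,
    mem_ofPred_eq, not_and_or, not_lt, abs_le, le_abs'] at h1 h2 h3 h4 hout ⊢
  grind (splits := 40)

section Roots

variable {A B C : ℝ}

theorem neg_of_lt_neg_sq_div (hC : 0 < C) (hA : A < -(B ^ 2) / (3 * C)) : A < 0 :=
  hA.trans_le (div_nonpos_of_nonpos_of_nonneg (neg_nonpos.2 (sq_nonneg B)) (by positivity))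

theorem sq_sqrt_discr (hA : A ≤ 0) (hC : 0 ≤ C) :
    √(B ^ 2 + 24 * |A| * C) ^ 2 = B ^ 2 - 24 * A * C := by
  rw [Real.sq_sqrt (by positivity), abs_of_nonpos hA]
  ring

theorem three_mul_abs_lt_sqrt_discr (hC : 0 < C) (hA : A < -(B ^ 2) / (3 * C)) :
    3 * |B| < √(B ^ 2 + 24 * |A| * C) := by
  have hA' : A * (3 * C) < -B ^ 2 := (lt_div_iff₀ (by positivity)).1 hA
  rw [Real.lt_sqrt (by positivity), mul_pow, sq_abs,
    abs_of_neg (neg_of_lt_neg_sq_div hC hA)]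
  linarith

theorem splus_add_sminus (hC : C ≠ 0) : splus A B C + sminus A B C = B / (2 * C) := by
  unfold splus sminus
  field_simp
  ring

theorem quadratic_eq_mul_sub_splus_sub_sminus (hA : A ≤ 0) (hC : 0 < C) (s : ℝ) :
    2 * C * s ^ 2 - B * s + 3 * A = 2 * C * (s - splus A B C) * (s - sminus A B C) := by
  have h := sq_sqrt_discr (B := B) hA hC.le
  unfold splus sminus
  generalize √(B ^ 2 + 24 * |A| * C) = R at h ⊢
  field_simp
  linear_combination 2 * h

theorem splus_pos (hC : 0 < C) (hA : A < -(B ^ 2) / (3 * C)) : 0 < splus A B C := by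
  have := three_mul_abs_lt_sqrt_discr hC hA
  unfold splus
  exact div_pos (by linarith [neg_abs_le B, abs_nonneg B]) (by positivity)

theorem two_mul_sminus_add_splus_neg (hC : 0 < C) (hA : A < -(B ^ 2) / (3 * C)) :
    2 * sminus A B C + splus A B C < 0 := by
  have := three_mul_abs_lt_sqrt_discr hC hA
  have : 2 * sminus A B C + splus A B C = (3 * B - √(B ^ 2 + 24 * |A| * C)) / (4 * C) := by
    unfold splus sminus
    field_simp
    ring
  rw [this]
  exact div_neg_of_neg_of_pos (by linarith [le_abs_self B]) (by positivity)

end Roots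

def reactionQ3 (A B C m r : ℝ) : ℝ := m * (6 * C * m ^ 2 - B * m + A) + r * (2 * C * m + B / 3)

def reactionSigma (A B C m r : ℝ) : ℝ :=
  A * (r + 3 * m ^ 2) + 2 * C * (r + 3 * m ^ 2) ^ 2 + 3 * B * m * (r - m ^ 2)

section Reaction

variable {A B C m r : ℝ}

theorem reactionQ3_neg (hC : 0 < C) (hA : A < -(B ^ 2) / (3 * C))
    (hm : m < sminus A B C / 3) (hr : 0 ≤ r) : reactionQ3 A B C m r < 0 := by
  have hsp := splus_pos hC hA
  have hsm := two_mul_sminus_add_splus_neg hC hA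
  have hquad :=
    quadratic_eq_mul_sub_splus_sub_sminus (B := B) (neg_of_lt_neg_sq_div hC hA).le hC (3 * m)
  have hsum := splus_add_sminus (A := A) (B := B) hC.ne'
  have hψ : 0 < 6 * C * m ^ 2 - B * m + A := by
    have : 0 < 2 * C * (3 * m - splus A B C) * (3 * m - sminus A B C) :=
      mul_pos_of_neg_of_neg (mul_neg_of_pos_of_neg (by positivity) (by linarith)) (by linarith)
    linarith
  have hcoef : 2 * C * m + B / 3 < 0 := by
    rw [eq_div_iff (by positivity)] at hsum
    nlinarith
  unfold reactionQ3
  nlinarith [mul_nonpos_of_nonneg_of_nonpos hr hcoef.le]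

theorem reactionQ3_pos (hB : 0 < B) (hC : 0 < C) (hA : A < -(B ^ 2) / (3 * C))
    (hm : -splus A B C / 6 < m) (hm₀ : m < 0) (hr : 0 ≤ r)
    (hS : r + 3 * m ^ 2 ≤ splus A B C ^ 2 / 3) : 0 < reactionQ3 A B C m r := by
  have hsp := splus_pos hC hA
  have hsm := two_mul_sminus_add_splus_neg hC hA
  have hA₀ := (neg_of_lt_neg_sq_div hC hA).le
  have hquad := quadratic_eq_mul_sub_splus_sub_sminus (B := B) hA₀ hC (3 * m)
  have hroot : 2 * C * splus A B C ^ 2 - B * splus A B C + 3 * A = 0 := by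
    rw [quadratic_eq_mul_sub_splus_sub_sminus hA₀ hC]
    ring
  have hψ : 6 * C * m ^ 2 - B * m + A < 0 := by
    have : 2 * C * (3 * m - splus A B C) * (3 * m - sminus A B C) < 0 :=
      mul_neg_of_neg_of_pos (mul_neg_of_pos_of_neg (by positivity) (by linarith)) (by linarith)
    linarith
  unfold reactionQ3
  rcases le_or_gt 0 (2 * C * m + B / 3) with hcoef | hcoef
  · nlinarith [mul_nonneg hr hcoef]
  · -- at `r = s₊²/3 - 3m²` the reaction term equals `2B (s₊/3 - m)(m + s₊/6)`
    nlinarith [mul_le_mul_of_nonpos_right (show r ≤ splus A B C ^ 2 / 3 - 3 * m ^ 2 by linarith)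
      hcoef.le, mul_pos (mul_pos hB (by linarith : 0 < splus A B C / 3 - m))
      (by linarith : 0 < m + splus A B C / 6)]

theorem reactionSigma_pos (hB : 0 < B) (hC : 0 < C) (hA : A < -(B ^ 2) / (3 * C))
    (hm : m ≤ 0) (hS : splus A B C ^ 2 / 3 < r + 3 * m ^ 2) :
    0 < reactionSigma A B C m r := by
  have hsp := splus_pos hC hA
  have hsm := two_mul_sminus_add_splus_neg hC hA
  set S := r + 3 * m ^ 2 with hSdef
  set y := √(3 * S)
  have hy₀ : 0 ≤ y := Real.sqrt_nonneg _
  have hS₀ : 0 < S := (by positivity : 0 ≤ splus A B C ^ 2 / 3).trans_lt hS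
  have hy2 : y ^ 2 = 3 * S := Real.sq_sqrt (by positivity)
  have hysp : splus A B C < y := by nlinarith
  -- `(y + 6m)² (y - 3m) ≥ 0` bounds the cubic term by `S y`
  have hcubic : -(S * y) ≤ 9 * m * (r - m ^ 2) := by
    nlinarith [mul_nonneg (sq_nonneg (y + 6 * m)) (by linarith : 0 ≤ y - 3 * m)]
  have hPy : 0 < 2 * C * y ^ 2 - B * y + 3 * A := by
    rw [quadratic_eq_mul_sub_splus_sub_sminus (neg_of_lt_neg_sq_div hC hA).le hC]
    exact mul_pos (mul_pos (by positivity) (by linarith)) (by linarith)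
  have hy2S : S * (2 * C * y ^ 2) = 6 * C * S ^ 2 := by rw [hy2]; ring
  have hcubicB := mul_le_mul_of_nonneg_left hcubic hB.le
  unfold reactionSigma
  rw [← hSdef]
  nlinarith [mul_pos hS₀ hPy]

end Reaction

theorem g0_sq_le {A B C η s : ℝ} (hs : |s| ≤ η) :
    g0 A B C η s ^ 2 ≤ splus A B C ^ 2 / 4 := by
  have hratio : (s / η) ^ 2 ≤ 1 := by
    rw [div_pow]
    exact div_le_one_of_le₀ (sq_le_sq.2 (hs.trans (le_abs_self η))) (sq_nonneg η)
  calc g0 A B C η s ^ 2 = splus A B C ^ 2 / 4 * (s / η) ^ 2 := by unfold g0; ring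
    _ ≤ splus A B C ^ 2 / 4 := mul_le_of_le_one_right (by positivity) hratio

theorem BC1.sq_le {A B C η : ℝ} {q1 : ℝ × ℝ → ℝ} (h : BC1 A B C η q1) {p : ℝ × ℝ}
    (hp : p ∈ frontier (TSq η)) : q1 p ^ 2 ≤ splus A B C ^ 2 / 4 := by
  obtain ⟨hC13, hC24, hS13, hS24⟩ := h
  rcases frontier_TSq_subset η hp with ((((((hp | hp) | hp) | hp) | hp) | hp) | hp) | hp
  · rw [hC13 p (.inl hp)]; exact (by ring : _ = _).le
  · rw [hC24 p (.inl hp)]; exact (by ring : _ = _).le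
  · rw [hC13 p (.inr hp)]; exact (by ring : _ = _).le
  · rw [hC24 p (.inr hp)]; exact (by ring : _ = _).le
  · rw [hS13 p (.inl hp)]; exact g0_sq_le hp.2
  · rw [hS24 p (.inl hp)]; exact g0_sq_le hp.2
  · rw [hS13 p (.inr hp)]; exact g0_sq_le hp.2
  · rw [hS24 p (.inr hp)]; exact g0_sq_le hp.2

namespace IsSolEL123

variable {A B C L lam η : ℝ} {q1 q2 q3 : ℝ × ℝ → ℝ} {p : ℝ × ℝ}

theorem lap2_q3 (hsol : IsSolEL123 A B C L lam η q1 q2 q3) (hp : p ∈ TSq η) :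
    lap2 q3 p = lam ^ 2 / L * reactionQ3 A B C (q3 p) (q1 p ^ 2 + q2 p ^ 2) := by
  have ⟨_, _, _, _, _, _, _, _, hpde3, _⟩ := hsol
  rw [hpde3 p hp, reactionQ3]
  ring

theorem lap2_sigma_ge (hsol : IsSolEL123 A B C L lam η q1 q2 q3) (hp : p ∈ TSq η) :
    2 * (lam ^ 2 / L) * reactionSigma A B C (q3 p) (q1 p ^ 2 + q2 p ^ 2) ≤
      lap2 (fun z => q1 z ^ 2 + q2 z ^ 2 + 3 * q3 z ^ 2) p := by
  have ⟨hd1, hd2, hd3, _, _, _, hpde1, hpde2, hpde3, _⟩ := hsol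
  have hnhds := (isOpen_TSq η).mem_nhds hp
  have h1 := hd1.contDiffAt hnhds
  have h2 := hd2.contDiffAt hnhds
  have h3 := hd3.contDiffAt hnhds
  rw [lap2_add ((h1.pow 2).add (h2.pow 2)) (contDiffAt_const.mul (h3.pow 2)),
    lap2_add (h1.pow 2) (h2.pow 2), lap2_const_mul, lap2_sq h1, lap2_sq h2, lap2_sq h3,
    hpde1 p hp, hpde2 p hp, hpde3 p hp]
  have hgrad : 0 ≤ 2 * gradSq2 q1 p + 2 * gradSq2 q2 p + 6 * gradSq2 q3 p := by
    unfold gradSq2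
    positivity
  refine (le_add_of_nonneg_right hgrad).trans_eq ?_
  unfold reactionSigma
  ring

theorem sigma_le (hsol : IsSolEL123 A B C L lam η q1 q2 q3) (hB : 0 < B) (hC : 0 < C)
    (hA : A < -(B ^ 2) / (3 * C)) (hk : 0 < lam ^ 2 / L) (hq3 : ∀ p ∈ TSq η, q3 p < 0) :
    ∀ p ∈ closure (TSq η), q1 p ^ 2 + q2 p ^ 2 + 3 * q3 p ^ 2 ≤ splus A B C ^ 2 / 3 := by
  have ⟨_, _, _, hc1, hc2, hc3, _, _, _, hbc1, hbc2, hbc3⟩ := hsol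
  refine le_on_closure_of_lap2_pos (isOpen_TSq η) (isCompact_closure_TSq η)
    (((hc1.pow 2).add (hc2.pow 2)).add (continuousOn_const.mul (hc3.pow 2))) (fun p hp => ?_)
    (fun p hp hgt => ?_)
  · rw [hbc2 p hp, hbc3 p hp]
    linarith [hbc1.sq_le hp]
  · exact (mul_pos (mul_pos two_pos hk) (reactionSigma_pos hB hC hA (hq3 p hp).le hgt)).trans_le
      (hsol.lap2_sigma_ge hp)

theorem sminus_div_three_le (hsol : IsSolEL123 A B C L lam η q1 q2 q3) (hC : 0 < C)
    (hA : A < -(B ^ 2) / (3 * C)) (hk : 0 < lam ^ 2 / L) :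
    ∀ p ∈ closure (TSq η), sminus A B C / 3 ≤ q3 p := by
  have ⟨_, _, _, _, _, hc3, _, _, _, _, _, hbc3⟩ := hsol
  refine ge_on_closure_of_lap2_neg (isOpen_TSq η) (isCompact_closure_TSq η) hc3
    (fun p hp => ?_) (fun p hp hlt => ?_)
  · rw [hbc3 p hp]
    linarith [two_mul_sminus_add_splus_neg hC hA]
  · rw [hsol.lap2_q3 hp]
    exact mul_neg_of_pos_of_neg hk (reactionQ3_neg hC hA hlt (by positivity))

theorem le_neg_splus_div_six (hsol : IsSolEL123 A B C L lam η q1 q2 q3) (hB : 0 < B) (hC : 0 < C)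
    (hA : A < -(B ^ 2) / (3 * C)) (hk : 0 < lam ^ 2 / L) (hq3 : ∀ p ∈ TSq η, q3 p < 0) :
    ∀ p ∈ closure (TSq η), q3 p ≤ -splus A B C / 6 := by
  have ⟨_, _, _, _, _, hc3, _, _, _, _, _, hbc3⟩ := hsol
  refine le_on_closure_of_lap2_pos (isOpen_TSq η) (isCompact_closure_TSq η) hc3
    (fun p hp => (hbc3 p hp).le) (fun p hp hgt => ?_)
  rw [hsol.lap2_q3 hp]
  exact mul_pos hk (reactionQ3_pos hB hC hA hgt (hq3 p hp) (by positivity)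
    (by linarith [hsol.sigma_le hB hC hA hk hq3 p (subset_closure hp)]))

end IsSolEL123

theorem statement_8_general (A B C L lam η : ℝ) (hB : 0 < B) (hC : 0 < C)
    (hA : A < -(B ^ 2) / (3 * C))
    (hL : 0 < L) (hlam : 0 < lam)
    (q1 q2 q3 : ℝ × ℝ → ℝ) (hsol : IsSolEL123 A B C L lam η q1 q2 q3)
    (hq3 : ∀ p ∈ TSq η, q3 p < 0) :
    ∀ p ∈ TSq η, sminus A B C / 3 ≤ q3 p ∧ q3 p ≤ -(splus A B C) / 6 := by
  have hk : 0 < lam ^ 2 / L := by positivity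
  exact fun p hp => ⟨hsol.sminus_div_three_le hC hA hk p (subset_closure hp),
    hsol.le_neg_splus_div_six hB hC hA hk hq3 p (subset_closure hp)⟩

/-- Proposition prop:bounds-lowA: for `A < −B²/(3C)` and a solution of
(EL123)–(BC123) with `q₃ < 0` in `Ω`, one has `s₋/3 ≤ q₃ ≤ −s₊/6` in `Ω`. -/
theorem statement_8 (A B C L lam η : ℝ) (hB : 0 < B) (hC : 0 < C)
    (hA : A < -(B ^ 2) / (3 * C))
    (hL : 0 < L) (hlam : 0 < lam) (hη : η ∈ Ioo (0 : ℝ) 1)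
    (q1 q2 q3 : ℝ × ℝ → ℝ) (hsol : IsSolEL123 A B C L lam η q1 q2 q3)
    (hq3 : ∀ p ∈ TSq η, q3 p < 0) :
    ∀ p ∈ TSq η, sminus A B C / 3 ≤ q3 p ∧ q3 p ≤ -(splus A B C) / 6 :=
  statement_8_general A B C L lam η hB hC hA hL hlam q1 q2 q3 hsol hq3
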